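/- Fix t > 0. Let L be a linear superoperator on 2^n × 2^n complex matrices such that for every s ≥ 0 the map e^{sL} is trace preserving and maps density matrices to density matrices. Then for every density matrix σ₀, the time-averaged state σ̄ := (1/t) ∫₀ᵗ e^{sL}[σ₀] ds satisfies ‖L[σ̄]‖₁ ≤ 2/t; in particular σ̄ is (2/t)-metastable. -/

import Mathlib

open MeasureTheory Matrix
open scoped Kronecker ComplexOrder

noncomputable section

namespace QMS

attribute [local instance] Matrix.frobeniusNormedAddCommGroup Matrix.frobeniusNormedSpace

variable {m : Type*} [Fintype m] [DecidableEq m]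

/-- Index type for an `n`-qubit system. -/
abbrev QIdx (n : ℕ) := Fin n → Fin 2

/-- The operator (spectral) norm of a matrix. -/
def opNorm (M : Matrix m m ℂ) : ℝ := ‖Matrix.toEuclideanCLM (𝕜 := ℂ) M‖

/-- The squared Frobenius (Schatten-2) norm. -/
def frobNormSq (M : Matrix m m ℂ) : ℝ := ((Mᴴ * M).trace).re

/-- The trace (Schatten-1) norm. -/
def traceNorm (M : Matrix m m ℂ) : ℝ :=
  (((Matrix.posSemidef_conjTranspose_mul_self M).1.eigenvectorUnitary : Matrix m m ℂ) *
      Matrix.diagonal (fun i => ((Real.sqrt ((Matrix.posSemidef_conjTranspose_mul_self M).1.eigenvalues i) : ℝ) : ℂ)) *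
      (star (Matrix.posSemidef_conjTranspose_mul_self M).1.eigenvectorUnitary : Matrix m m ℂ)).trace.re

/-- Functional calculus for Hermitian matrices (junk value `0` otherwise). -/
def matFun (f : ℝ → ℝ) (M : Matrix m m ℂ) : Matrix m m ℂ :=
  @dite _ (M.IsHermitian) (Classical.dec _)
    (fun h => (h.eigenvectorUnitary : Matrix m m ℂ) *
        Matrix.diagonal (fun i => (f (h.eigenvalues i) : ℂ)) *
        star (h.eigenvectorUnitary : Matrix m m ℂ))
    (fun _ => 0)

/-- Real matrix power via functional calculus. -/
def mpow (M : Matrix m m ℂ) (s : ℝ) : Matrix m m ℂ := matFun (fun x => x ^ s) M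

/-- Matrix logarithm via functional calculus. -/
def mlog (M : Matrix m m ℂ) : Matrix m m ℂ := matFun Real.log M

/-- Matrix square root via functional calculus. -/
def msqrt (M : Matrix m m ℂ) : Matrix m m ℂ := mpow M (1/2 : ℝ)

/-- The von Neumann entropy `S(σ) = -Tr[σ log σ]`. -/
def entropy (M : Matrix m m ℂ) : ℝ :=
  @dite _ (M.IsHermitian) (Classical.dec _)
    (fun h => -∑ i, h.eigenvalues i * Real.log (h.eigenvalues i)) (fun _ => 0)

/-- Matrix exponential. -/
def mexp (M : Matrix m m ℂ) : Matrix m m ℂ := NormedSpace.exp M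

/-- The Gibbs state `ρ = e^{-βH}/Tr[e^{-βH}]`. -/
def gibbs (H : Matrix m m ℂ) (β : ℝ) : Matrix m m ℂ :=
  ((mexp ((-(β : ℂ)) • H)).trace)⁻¹ • mexp ((-(β : ℂ)) • H)

/-- Heisenberg evolution `A(t) = e^{iHt} A e^{-iHt}`. -/
def heis (H A : Matrix m m ℂ) (t : ℝ) : Matrix m m ℂ :=
  mexp ((Complex.I * (t : ℂ)) • H) * A * mexp ((-(Complex.I * (t : ℂ))) • H)

/-- The Gaussian time filter `f_ς(t)`. -/
def fG (ς t : ℝ) : ℝ := Real.exp (-(ς^2 * t^2)) * Real.sqrt (ς * Real.sqrt (2 / Real.pi))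

/-- The Fourier transform `f̂_ς(ω)` of the Gaussian filter. -/
def fGhat (ς ω : ℝ) : ℝ :=
  Real.exp (-(ω^2 / (4 * ς^2))) / Real.sqrt (ς * Real.sqrt (2 * Real.pi))

/-- The operator Fourier transform `Â(ω)`. -/
def oft (H : Matrix m m ℂ) (ς : ℝ) (A : Matrix m m ℂ) (ω : ℝ) : Matrix m m ℂ :=
  (1 / Real.sqrt (2 * Real.pi)) •
    ∫ t : ℝ, (Complex.exp (-(Complex.I * (ω : ℂ) * (t : ℂ))) * ((fG ς t : ℝ) : ℂ)) • heis H A t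

/-- The time-evolved operator Fourier transform `Â(ω, t)`. -/
def oft2 (H : Matrix m m ℂ) (ς : ℝ) (A : Matrix m m ℂ) (ω t : ℝ) : Matrix m m ℂ :=
  heis H (oft H ς A ω) t

/-- The shifted Metropolis weight `γ(ω)`. -/
def metro (β ς ω : ℝ) : ℝ := Real.exp (-(β * max (ω + β * ς^2 / 2) 0))

/-- The Dirichlet frequency filter `h(ω)`. -/
def hFil (β ς ω : ℝ) : ℝ := Real.exp (-(ς^2 * β^2 / 8)) * Real.exp (-(|ω| * β / 2))

/-- The Dirichlet time filter `g(t)`. -/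
def gFil (β t : ℝ) : ℝ := 1 / (β * Real.cosh (2 * Real.pi * t / β))

/-- The coherent-term time filter `c(t)`. -/
def cFil (β t : ℝ) : ℝ := 1 / (β * Real.sinh (2 * Real.pi * t / β))

/-- The `s`-weighted frequency filter `h_s(ω)`. -/
def hFilS (β ς s ω : ℝ) : ℝ :=
  Real.exp (s * β * (2 * ω - s * β * ς^2) / 2) * hFil β ς (ω - s * β * ς^2)

/-- The `s`-weighted time filter `g_s(t)`. -/
def gFilS (β s t : ℝ) : ℝ :=
  (2 / β) * (Real.cos (s * Real.pi) * Real.cosh (2 * Real.pi * t / β)) /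
    (Real.cosh (4 * Real.pi * t / β) + Real.cos (2 * s * Real.pi))

/-- The ADB time filter `g^{ADB}_s(t)`. -/
def gADB (β s t : ℝ) : ℝ :=
  (1 / (2 * Real.pi * β)) *
    Real.log ((Real.cosh (2 * Real.pi * t / β) + Real.cos (s * Real.pi)) /
      (Real.cosh (2 * Real.pi * t / β) - Real.cos (s * Real.pi)))

/-- The coherent term `C^a`. -/
def coherent (H : Matrix m m ℂ) (β ς : ℝ) (A : Matrix m m ℂ) : Matrix m m ℂ :=
  ∫ t : ℝ, ∫ ω : ℝ, ((metro β ς ω * cFil β t : ℝ)) • ((oft2 H ς A ω t)ᴴ * oft2 H ς A ω t)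

/-- The local (KMS detailed balanced) Lindbladian `L_a` with jump `A`. -/
def lindblad (H : Matrix m m ℂ) (β ς : ℝ) (A X : Matrix m m ℂ) : Matrix m m ℂ :=
  (-Complex.I) • (coherent H β ς A * X - X * coherent H β ς A) +
    ∫ ω : ℝ, (metro β ς ω : ℝ) •
      (oft H ς A ω * X * (oft H ς A ω)ᴴ -
        (2⁻¹ : ℂ) • ((oft H ς A ω)ᴴ * oft H ς A ω * X + X * ((oft H ς A ω)ᴴ * oft H ς A ω)))

/-- The Heisenberg picture (Hilbert-Schmidt adjoint) Lindbladian `L_a†`. -/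
def lindbladDag (H : Matrix m m ℂ) (β ς : ℝ) (A Y : Matrix m m ℂ) : Matrix m m ℂ :=
  Complex.I • (coherent H β ς A * Y - Y * coherent H β ς A) +
    ∫ ω : ℝ, (metro β ς ω : ℝ) •
      ((oft H ς A ω)ᴴ * Y * oft H ς A ω -
        (2⁻¹ : ℂ) • ((oft H ς A ω)ᴴ * oft H ς A ω * Y + Y * ((oft H ς A ω)ᴴ * oft H ς A ω)))

/-- The Hilbert-Schmidt adjoint of a superoperator. -/
def hsAdj (Φ : Matrix m m ℂ → Matrix m m ℂ) (Y : Matrix m m ℂ) : Matrix m m ℂ :=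
  ∑ a : m, ∑ b : m,
    (((Φ (Matrix.single a b 1))ᴴ * Y).trace) • Matrix.single a b 1

/-- A superoperator is trace preserving. -/
def TracePreserving (Φ : Matrix m m ℂ → Matrix m m ℂ) : Prop :=
  ∀ X, (Φ X).trace = X.trace

/-- A superoperator is completely positive. -/
def IsCP (Φ : Matrix m m ℂ → Matrix m m ℂ) : Prop :=
  ∀ (k : ℕ) (X : Matrix (m × Fin k) (m × Fin k) ℂ), X.PosSemidef →
    (Matrix.of fun p q : m × Fin k =>
      Φ (Matrix.of fun a b => X (a, p.2) (b, q.2)) p.1 q.1).PosSemidef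

/-- The exponential `e^{sL}` of a superoperator `L`. -/
def superExp (L : Matrix m m ℂ → Matrix m m ℂ) (s : ℝ) (X : Matrix m m ℂ) : Matrix m m ℂ :=
  ∑' k : ℕ, ((s ^ k / (Nat.factorial k) : ℝ)) • L^[k] X

/-- The time-averaging map `R_t[X] = (1/t) ∫₀ᵗ e^{sL}[X] ds`. -/
def timeAvg (L : Matrix m m ℂ → Matrix m m ℂ) (t : ℝ) (X : Matrix m m ℂ) : Matrix m m ℂ :=
  (1 / t) • ∫ s in (0 : ℝ)..t, superExp L s X

/-- The squared `(σ, s)`-weighted norm `‖X‖²_{σ,s} = Tr[X† σ^{1/2+s} X σ^{1/2-s}]`. -/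
def wNormSq (σ : Matrix m m ℂ) (s : ℝ) (X : Matrix m m ℂ) : ℝ :=
  ((Xᴴ * mpow σ (1/2 + s) * X * mpow σ (1/2 - s)).trace).re

/-- Approximate detailed balance error `ADB_a[σ]`. -/
def adb (H : Matrix m m ℂ) (β ς : ℝ) (A σ : Matrix m m ℂ) : ℝ :=
  ∫ t : ℝ, ∫ ω : ℝ,
    frobNormSq (oft2 H ς A ω t * msqrt σ -
        msqrt σ * mpow (gibbs H β) (-(1/2 : ℝ)) * oft2 H ς A ω t * mpow (gibbs H β) (1/2 : ℝ)) *
      metro β ς ω * gFil β t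

/-- The relative Fisher information `FI_a[σ‖ρ]`. -/
def fisherInfo (H : Matrix m m ℂ) (β ς : ℝ) (A σ : Matrix m m ℂ) : ℝ :=
  ∫ t : ℝ, ∫ ω : ℝ, ∫ s in (-(1/2) : ℝ)..(1/2 : ℝ),
    wNormSq σ s (oft2 H ς A ω t * (mlog σ - mlog (gibbs H β)) -
        (mlog σ - mlog (gibbs H β)) * oft2 H ς A ω t) *
      hFilS β ς s ω * gFilS β s t

/-- The set of Bohr frequencies of a Hermitian matrix. -/
def bohrSet {H : Matrix m m ℂ} (hH : H.IsHermitian) : Finset ℝ :=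
  Finset.image (fun p : m × m => hH.eigenvalues p.1 - hH.eigenvalues p.2) Finset.univ

/-- The Bohr-frequency component `X_ν`. -/
def bohrComp {H : Matrix m m ℂ} (hH : H.IsHermitian) (X : Matrix m m ℂ) (ν : ℝ) :
    Matrix m m ℂ :=
  (hH.eigenvectorUnitary : Matrix m m ℂ) *
    (Matrix.of fun i j =>
      @ite _ (hH.eigenvalues i - hH.eigenvalues j = ν) (Classical.dec _)
        ((star (hH.eigenvectorUnitary : Matrix m m ℂ) * X *
          (hH.eigenvectorUnitary : Matrix m m ℂ)) i j) 0) *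
    star (hH.eigenvectorUnitary : Matrix m m ℂ)

/- n-qubit machinery -/

/-- The single qubit Pauli matrices `I, X, Y, Z`. -/
def pauli1 : Fin 4 → Matrix (Fin 2) (Fin 2) ℂ :=
  ![1, !![0, 1; 1, 0], !![0, -Complex.I; Complex.I, 0], !![1, 0; 0, -1]]

/-- The Pauli string `⊗_i P_{p i}`. -/
def pauliString {n : ℕ} (p : Fin n → Fin 4) : Matrix (QIdx n) (QIdx n) ℂ :=
  Matrix.of fun x y => ∏ i, pauli1 (p i) (x i) (y i)

/-- The single-qubit Pauli `X_i, Y_i, Z_i` acting on qubit `i` of an `n`-qubit system. -/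
def sqPauli {n : ℕ} (i : Fin n) (k : Fin 3) : Matrix (QIdx n) (QIdx n) ℂ :=
  pauliString (fun j => if j = i then (⟨k.val + 1, by omega⟩ : Fin 4) else 0)

/-- Merge configurations on a region and its complement. -/
def merge {n : ℕ} (A : Finset (Fin n)) (u : {i : Fin n // i ∈ A} → Fin 2)
    (v : {i : Fin n // i ∉ A} → Fin 2) : QIdx n :=
  fun i => if h : i ∈ A then u ⟨i, h⟩ else v ⟨i, h⟩

/-- Restriction of a configuration to a region. -/
def restr {n : ℕ} (A : Finset (Fin n)) (x : QIdx n) : {i : Fin n // i ∈ A} → Fin 2 :=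
  fun i => x i.1

/-- Restriction of a configuration to the complement of a region. -/
def restrC {n : ℕ} (A : Finset (Fin n)) (x : QIdx n) : {i : Fin n // i ∉ A} → Fin 2 :=
  fun i => x i.1

/-- The partial trace onto region `A` (tracing out the complement). -/
def ptrace {n : ℕ} (A : Finset (Fin n)) (σ : Matrix (QIdx n) (QIdx n) ℂ) :
    Matrix ({i : Fin n // i ∈ A} → Fin 2) ({i : Fin n // i ∈ A} → Fin 2) ℂ :=
  Matrix.of fun a b => ∑ v : {i : Fin n // i ∉ A} → Fin 2, σ (merge A a v) (merge A b v)

/-- The partial trace onto the complement of region `A`. -/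
def ptraceC {n : ℕ} (A : Finset (Fin n)) (σ : Matrix (QIdx n) (QIdx n) ℂ) :
    Matrix ({i : Fin n // i ∉ A} → Fin 2) ({i : Fin n // i ∉ A} → Fin 2) ℂ :=
  Matrix.of fun u v => ∑ a : {i : Fin n // i ∈ A} → Fin 2, σ (merge A a u) (merge A a v)

/-- The mutual information `I(A : Ā)_σ = S(σ_A) + S(σ_Ā) - S(σ)`. -/
def mutualInfo {n : ℕ} (A : Finset (Fin n)) (σ : Matrix (QIdx n) (QIdx n) ℂ) : ℝ :=
  entropy (ptrace A σ) + entropy (ptraceC A σ) - entropy σ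

/-- The product state `σ_Ā ⊗ σ_A`, reindexed on the full system. -/
def prodState {n : ℕ} (A : Finset (Fin n)) (σ : Matrix (QIdx n) (QIdx n) ℂ) :
    Matrix (QIdx n) (QIdx n) ℂ :=
  Matrix.of fun x y =>
    ptrace A σ (restr A x) (restr A y) * ptraceC A σ (restrC A x) (restrC A y)

/-- Extension `N ⊗ id` of a superoperator on region `A` to the full system. -/
def actOnRegion {n : ℕ} (A : Finset (Fin n))
    (N : Matrix ({i : Fin n // i ∈ A} → Fin 2) ({i : Fin n // i ∈ A} → Fin 2) ℂ →
         Matrix ({i : Fin n // i ∈ A} → Fin 2) ({i : Fin n // i ∈ A} → Fin 2) ℂ)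
    (X : Matrix (QIdx n) (QIdx n) ℂ) : Matrix (QIdx n) (QIdx n) ℂ :=
  Matrix.of fun x y =>
    N (Matrix.of fun a b => X (merge A a (restrC A x)) (merge A b (restrC A y)))
      (restr A x) (restr A y)

/-- The sum of the local Lindbladians with single-qubit Pauli jumps in region `A`
(with Gaussian width `ς = 1/β`). -/
def lindbladRegion {n : ℕ} (H : Matrix (QIdx n) (QIdx n) ℂ) (β : ℝ) (A : Finset (Fin n))
    (X : Matrix (QIdx n) (QIdx n) ℂ) : Matrix (QIdx n) (QIdx n) ℂ :=
  ∑ i ∈ A, ∑ k : Fin 3, lindblad H β (1/β) (sqPauli i k) X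

/-- The full thermal Lindbladian `L = -i[H,·] + Σ_a L_a` with all single-qubit Pauli jumps
(with Gaussian width `ς = 1/β`). -/
def fullLindblad {n : ℕ} (H : Matrix (QIdx n) (QIdx n) ℂ) (β : ℝ)
    (X : Matrix (QIdx n) (QIdx n) ℂ) : Matrix (QIdx n) (QIdx n) ℂ :=
  (-Complex.I) • (H * X - X * H) + ∑ i : Fin n, ∑ k : Fin 3, lindblad H β (1/β) (sqPauli i k) X

/-- A matrix on `n` qubits is supported on the set `S` of qubits. -/
def SupportedOn {n : ℕ} (S : Finset (Fin n)) (M : Matrix (QIdx n) (QIdx n) ℂ) : Prop :=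
  (∀ x y : QIdx n, (∃ i, i ∉ S ∧ x i ≠ y i) → M x y = 0) ∧
  (∀ x y x' y' : QIdx n, (∀ i ∈ S, x i = x' i) → (∀ i ∈ S, y i = y' i) →
    (∀ i, i ∉ S → x i = y i) → (∀ i, i ∉ S → x' i = y' i) → M x y = M x' y')

end QMS

/-!
Along the orbit `s ↦ e^{sL}[σ₀]` the derivative is `L[e^{sL}[σ₀]]`, so the fundamental theorem of
calculus turns `L[σ̄]` into the boundary term `(e^{tL}[σ₀] - σ₀) / t`: a scaled difference of two
density matrices. Diagonalising that difference, each eigenvalue is a difference of two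
nonnegative diagonal entries of the conjugated states, so its trace norm is at most the sum of
the two traces, `2`.
-/

namespace QMS

variable {m : Type*} [Fintype m]

section TraceNorm

variable [DecidableEq m]

lemma traceNorm_eq_sum_abs_eigenvalues {M : Matrix m m ℂ} (hM : M.IsHermitian) :
    traceNorm M = ∑ i, |hM.eigenvalues i| := by
  have hP := (Matrix.posSemidef_conjTranspose_mul_self M).1
  have h1 : traceNorm M = (cfc Real.sqrt (Mᴴ * M)).trace.re := by
    rw [hP.cfc_eq, IsHermitian.cfc, Unitary.conjStarAlgAut_apply]; rfl
  have h2 : cfc Real.sqrt (Mᴴ * M) = cfc (fun x : ℝ => |x|) M := by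
    rw [hM.eq, ← pow_two]
    refine (cfc_comp_pow Real.sqrt 2 M (ha := hM)).symm.trans ?_
    congr 1; funext x; exact Real.sqrt_sq_eq_abs x
  rw [h1, h2, hM.cfc_eq, IsHermitian.cfc, Unitary.conjStarAlgAut_apply, Matrix.trace_mul_cycle,
    Unitary.coe_star_mul_self, Matrix.one_mul, Matrix.trace_diagonal]
  simp

lemma eigenvalues_eq_re_diag_conj {M : Matrix m m ℂ} (hM : M.IsHermitian) (i : m) :
    hM.eigenvalues i =
      ((star (hM.eigenvectorUnitary : Matrix m m ℂ) * M * hM.eigenvectorUnitary) i i).re := by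
  have hdiag := hM.conjStarAlgAut_star_eigenvectorUnitary
  rw [Unitary.conjStarAlgAut_star_apply] at hdiag
  simp [hdiag]

lemma trace_star_mul_mul_of_mem_unitary {U : Matrix m m ℂ} (hU : U ∈ unitary (Matrix m m ℂ))
    (A : Matrix m m ℂ) :
    (star U * A * U).trace = A.trace := by
  rw [Matrix.trace_mul_cycle, Unitary.mul_star_self_of_mem hU, Matrix.one_mul]

lemma traceNorm_sub_le_of_posSemidef {A B : Matrix m m ℂ} (hA : A.PosSemidef)
    (hB : B.PosSemidef) :
    traceNorm (A - B) ≤ A.trace.re + B.trace.re := by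
  have hM : (A - B).IsHermitian := hA.1.sub hB.1
  set U : Matrix m m ℂ := (hM.eigenvectorUnitary : Matrix m m ℂ) with hU
  have hA' : (star U * A * U).PosSemidef := by
    simpa [Matrix.star_eq_conjTranspose] using hA.conjTranspose_mul_mul_same U
  have hB' : (star U * B * U).PosSemidef := by
    simpa [Matrix.star_eq_conjTranspose] using hB.conjTranspose_mul_mul_same U
  calc traceNorm (A - B)
      = ∑ i, |((star U * A * U) i i).re - ((star U * B * U) i i).re| := by
        rw [traceNorm_eq_sum_abs_eigenvalues hM]
        simp only [eigenvalues_eq_re_diag_conj hM, ← hU, Matrix.mul_sub, Matrix.sub_mul,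
          Matrix.sub_apply, Complex.sub_re]
    _ ≤ ∑ i, (((star U * A * U) i i).re + ((star U * B * U) i i).re) := by
        gcongr with i
        have ha := (Complex.nonneg_iff.mp (hA'.diag_nonneg (i := i))).1
        have hb := (Complex.nonneg_iff.mp (hB'.diag_nonneg (i := i))).1
        exact abs_sub_le_iff.2 ⟨by linarith, by linarith⟩
    _ = A.trace.re + B.trace.re := by
        rw [← trace_star_mul_mul_of_mem_unitary hM.eigenvectorUnitary.2 A,
          ← trace_star_mul_mul_of_mem_unitary hM.eigenvectorUnitary.2 B]
        simp [Matrix.trace, Finset.sum_add_distrib, Complex.re_sum, U]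

lemma traceNorm_smul_sub_le_of_trace_eq_one {ρ σ : Matrix m m ℂ} (hρ : ρ.PosSemidef)
    (hσ : σ.PosSemidef) (hρ1 : ρ.trace = 1) (hσ1 : σ.trace = 1) {c : ℝ} (hc : 0 ≤ c) :
    traceNorm (c • (ρ - σ)) ≤ 2 * c := by
  rw [smul_sub]
  calc traceNorm (c • ρ - c • σ) ≤ (c • ρ).trace.re + (c • σ).trace.re :=
        traceNorm_sub_le_of_posSemidef (hρ.smul hc) (hσ.smul hc)
    _ = 2 * c := by simp [Matrix.trace_smul, hρ1, hσ1]; ring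

end TraceNorm

section Dynamics

variable (L : Matrix m m ℂ →ₗ[ℝ] Matrix m m ℂ)

attribute [local instance] Matrix.frobeniusNormedAddCommGroup Matrix.frobeniusNormedSpace

-- The Pi topology on matrices is not reducibly the Frobenius one, which operator norms and
-- `NormedSpace.exp` on `Matrix m m ℂ →L[ℝ] Matrix m m ℂ` are built from.
local instance : UniformSpace (Matrix m m ℂ) :=
  Matrix.frobeniusNormedAddCommGroup.toUniformSpace
local instance : TopologicalSpace (Matrix m m ℂ) :=
  Matrix.frobeniusNormedAddCommGroup.toUniformSpace.toTopologicalSpace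

lemma superExp_eq_exp (s : ℝ) (X : Matrix m m ℂ) :
    superExp L s X = NormedSpace.exp (s • LinearMap.toContinuousLinearMap L) X := by
  set T := LinearMap.toContinuousLinearMap L
  have hsum := NormedSpace.expSeries_summable' (𝕂 := ℝ) (s • T)
  have happly := (ContinuousLinearMap.apply ℝ (Matrix m m ℂ) X).map_tsum hsum
  rw [NormedSpace.exp_eq_tsum ℝ]
  refine Eq.trans (tsum_congr fun k => ?_) happly.symm
  simp only [ContinuousLinearMap.apply_apply, _root_.smul_apply, smul_pow, smul_smul,
    div_eq_inv_mul, T]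
  rw [FunLike.coe_pow_eq_iterate, LinearMap.coe_toContinuousLinearMap']

lemma superExp_zero (X : Matrix m m ℂ) : superExp L 0 X = X := by
  simp [superExp_eq_exp]

lemma hasDerivAt_superExp (X : Matrix m m ℂ) (s : ℝ) :
    HasDerivAt (fun s => superExp L s X) (L (superExp L s X)) s := by
  simp only [superExp_eq_exp]
  exact (ContinuousLinearMap.apply ℝ _ X).hasFDerivAt.comp_hasDerivAt s
    (hasDerivAt_exp_smul_const' (𝕂 := ℝ) (LinearMap.toContinuousLinearMap L) s)

lemma map_intervalIntegral_superExp (X : Matrix m m ℂ) (t : ℝ) :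
    L (∫ s in (0 : ℝ)..t, superExp L s X) = superExp L t X - X := by
  have hcont : Continuous fun s => superExp L s X :=
    continuous_iff_continuousAt.2 fun s => (hasDerivAt_superExp L X s).continuousAt
  have hFTC := intervalIntegral.integral_eq_sub_of_hasDerivAt
    (fun s _ => hasDerivAt_superExp L X s)
    (((LinearMap.toContinuousLinearMap L).continuous.comp hcont).intervalIntegrable 0 t)
  rw [superExp_zero] at hFTC
  rw [← hFTC]
  exact ((LinearMap.toContinuousLinearMap L).intervalIntegral_comp_comm
    (hcont.intervalIntegrable (μ := volume) 0 t)).symm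

lemma map_timeAvg (X : Matrix m m ℂ) (t : ℝ) :
    L (timeAvg L t X) = (1 / t) • (superExp L t X - X) := by
  rw [timeAvg, map_smul, map_intervalIntegral_superExp]

end Dynamics

/-- Time-averaging forces metastability: the time-averaged state
`σ̄ = (1/t)∫₀ᵗ e^{sL}[σ₀] ds` satisfies `‖L[σ̄]‖₁ ≤ 2/t`. -/
theorem time_averaging_forces_metastability (n : ℕ) (t : ℝ) (ht : 0 < t)
    (L : Matrix (QIdx n) (QIdx n) ℂ →ₗ[ℂ] Matrix (QIdx n) (QIdx n) ℂ)
    (hTP : ∀ s : ℝ, 0 ≤ s → ∀ X : Matrix (QIdx n) (QIdx n) ℂ,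
      (superExp (⇑L) s X).trace = X.trace)
    (hPos : ∀ s : ℝ, 0 ≤ s → ∀ σ : Matrix (QIdx n) (QIdx n) ℂ,
      σ.PosSemidef → σ.trace = 1 → (superExp (⇑L) s σ).PosSemidef)
    (σ₀ : Matrix (QIdx n) (QIdx n) ℂ) (hσ₀ : σ₀.PosSemidef) (hσ₀1 : σ₀.trace = 1) :
    traceNorm (L (timeAvg (⇑L) t σ₀)) ≤ 2 / t := by
  have hL := map_timeAvg (L.restrictScalars ℝ) σ₀ t
  rw [LinearMap.coe_restrictScalars] at hL
  calc traceNorm (L (timeAvg (⇑L) t σ₀)) ≤ 2 * (1 / t) := by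
        rw [hL]
        exact traceNorm_smul_sub_le_of_trace_eq_one (hPos t ht.le σ₀ hσ₀ hσ₀1) hσ₀
          ((hTP t ht.le σ₀).trans hσ₀1) hσ₀1 (by positivity)
    _ = 2 / t := by ring

end QMS
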